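/- arXiv:1911.06289 — 10 statements merged into one kernel-verified Lean document; each statement's English description precedes it below -/
import Mathlib

section
/- Let T be a tournament on n ≥ 2 vertices and let x be any vertex of T. There exists a set R of at most ⌊n/2⌋ edges of T such that in the tournament T^R obtained by reversing the edges of R, some vertex y ≠ x is a Condorcet winner (and hence x is not in the top cycle of T^R). -/
def IsTournament {V : Type*} (r : V → V → Prop) : Prop :=
  (∀ x, ¬ r x x) ∧ ∀ x y, x ≠ y → (r x y ↔ ¬ r y x)

def rev {V : Type*} (r : V → V → Prop) (R : Finset (V × V)) (a b : V) : Prop :=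
  ((a, b) ∉ R ∧ r a b) ∨ (b, a) ∈ R

/-!
Let `y` be a Copeland winner of the tournament restricted to `V ∖ {x}`, taken as a vertex of
minimum in-degree there. Since in-degrees in a tournament on `m` vertices sum to `m(m-1)/2`, the
vertex `y` has at most `(n-2)/2` in-neighbours besides `x`, hence at most `⌊n/2⌋` in-neighbours
in all. Reversing exactly these edges makes `y` a Condorcet winner, and as no edge then enters
`y`, the vertex `x` cannot reach it.
-/

open Finset

section

variable {V : Type*} {r : V → V → Prop}

theorem Relation.not_reflTransGen_of_forall_not {a b : V} (hab : a ≠ b) (hb : ∀ c, ¬ r c b) :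
    ¬ Relation.ReflTransGen r a b := fun h =>
  h.cases_tail.elim (fun hba => hab hba.symm) fun ⟨c, _, hcb⟩ => hb c hcb

namespace IsTournament

variable [DecidableEq V] [DecidableRel r]

theorem card_filter_add_card_filter (hT : IsTournament r) {S : Finset V} {y : V} (hy : y ∈ S) :
    #{z ∈ S | r y z} + #{z ∈ S | r z y} = #S - 1 := by
  have hout : {z ∈ S | r y z} = {z ∈ S.erase y | r y z} := by
    rw [filter_erase, erase_eq_of_notMem]
    simp [hT.1 y]
  have hin : {z ∈ S | r z y} = {z ∈ S.erase y | ¬ r y z} := by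
    ext z
    by_cases hzy : z = y
    · simp [hzy, hT.1 y]
    · simp [hzy, hT.2 z y hzy]
  rw [hout, hin, card_filter_add_card_filter_not, card_erase_of_mem hy]

theorem exists_two_mul_card_filter_le (hT : IsTournament r) {S : Finset V} (hS : S.Nonempty) :
    ∃ y ∈ S, 2 * #{z ∈ S | r z y} ≤ #S - 1 := by
  obtain ⟨y, hy, hmin⟩ := S.exists_min_image (fun y => #{z ∈ S | r z y}) hS
  refine ⟨y, hy, Nat.le_of_mul_le_mul_left ?_ hS.card_pos⟩
  calc #S * (2 * #{z ∈ S | r z y}) = 2 * ∑ _w ∈ S, #{z ∈ S | r z y} := by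
        rw [sum_const, smul_eq_mul]; ring
    _ ≤ 2 * ∑ w ∈ S, #{z ∈ S | r z w} := Nat.mul_le_mul_left 2 (sum_le_sum hmin)
    _ = ∑ w ∈ S, (#{z ∈ S | r w z} + #{z ∈ S | r z w}) := by
        rw [sum_add_distrib, two_mul]
        congr 1
        exact (sum_card_bipartiteAbove_eq_sum_card_bipartiteBelow r).symm
    _ = #S * (#S - 1) := by
        rw [sum_congr rfl fun w hw => hT.card_filter_add_card_filter hw, sum_const, smul_eq_mul]

end IsTournament

def edgesInto [Fintype V] (r : V → V → Prop) [DecidableRel r] (y : V) : Finset (V × V) :=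
  ({z | r z y} : Finset V) ×ˢ {y}

variable [Fintype V] [DecidableRel r]

theorem mem_edgesInto {y : V} {e : V × V} : e ∈ edgesInto r y ↔ r e.1 y ∧ e.2 = y := by
  simp only [edgesInto, mem_product, mem_filter, mem_univ, true_and, mem_singleton]

theorem rel_of_mem_edgesInto {y : V} {e : V × V} (he : e ∈ edgesInto r y) : r e.1 e.2 := by
  obtain ⟨h, h2⟩ := mem_edgesInto.1 he
  rwa [h2]

theorem card_edgesInto (y : V) : #(edgesInto r y) = #{z | r z y} := by
  simp [edgesInto]

theorem not_rev_edgesInto (hirr : ∀ a, ¬ r a a) (y w : V) : ¬ rev r (edgesInto r y) w y := by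
  rintro (⟨hnot, hwy⟩ | hmem)
  · exact hnot (mem_edgesInto.2 ⟨hwy, rfl⟩)
  · exact hirr y (mem_edgesInto.1 hmem).1

theorem IsTournament.rev_edgesInto_of_ne (hT : IsTournament r) {y z : V} (hzy : z ≠ y) :
    rev r (edgesInto r y) y z := by
  by_cases hyz : r y z
  · exact Or.inl ⟨fun h => hzy (mem_edgesInto.1 h).2, hyz⟩
  · exact Or.inr (mem_edgesInto.2 ⟨(hT.2 z y hzy).2 hyz, rfl⟩)

end

theorem destructive_bound_top_cycle_general {V : Type*} [Fintype V]
    (r : V → V → Prop) (hT : IsTournament r) (x : V)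
    (hn : 2 ≤ Fintype.card V) :
    ∃ R : Finset (V × V), (∀ e ∈ R, r e.1 e.2) ∧
      R.card ≤ Fintype.card V / 2 ∧
      ∃ y : V, y ≠ x ∧ (∀ z : V, z ≠ y → rev r R y z) ∧
        ¬ (∀ z : V, Relation.ReflTransGen (rev r R) x z) := by
  classical
  have hcard : #(univ.erase x) = Fintype.card V - 1 := by
    rw [card_erase_of_mem (mem_univ x), card_univ]
  obtain ⟨y, hy, hdeg⟩ := hT.exists_two_mul_card_filter_le (S := univ.erase x)
    (card_pos.1 (by omega))
  have hyx : y ≠ x := ne_of_mem_erase hy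
  refine ⟨edgesInto r y, fun e he => rel_of_mem_edgesInto he, ?_, y, hyx,
    fun z hz => hT.rev_edgesInto_of_ne hz, fun hreach => ?_⟩
  · have hin : #{z | r z y} - 1 ≤ #{z ∈ univ.erase x | r z y} := by
      rw [filter_erase]
      exact pred_card_le_card_erase
    rw [card_edgesInto]
    omega
  · exact Relation.not_reflTransGen_of_forall_not hyx.symm (not_rev_edgesInto hT.1 y)
      (hreach y)

theorem destructive_bound_top_cycle {V : Type*} [Fintype V] [DecidableEq V]
    (r : V → V → Prop) (hT : IsTournament r) (x : V)
    (hn : 2 ≤ Fintype.card V) :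
    ∃ R : Finset (V × V), (∀ e ∈ R, r e.1 e.2) ∧
      R.card ≤ Fintype.card V / 2 ∧
      ∃ y : V, y ≠ x ∧ (∀ z : V, z ≠ y → rev r R y z) ∧
        ¬ (∀ z : V, Relation.ReflTransGen (rev r R) x z) :=
  destructive_bound_top_cycle_general r hT x hn
end

section
/- Let T be a tournament on n ≥ 2 vertices and x a vertex that is not in the top cycle of T. Then there exists a single edge e of T such that after reversing e, x is a 3-king, i.e., x reaches every other vertex by a directed path of length at most 3. Consequently, for every k ≥ 3, reversing one edge suffices to make x a k-king (and a member of the top cycle). -/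
def reachIn {V : Type*} (r : V → V → Prop) : ℕ → V → V → Prop
  | 0, x, y => x = y
  | (k+1), x, y => x = y ∨ ∃ z, r x z ∧ reachIn r k z y

/-!
Let `y` be a vertex of maximum out-degree in `T - x`; then `y` reaches every other vertex of
`T - x` in at most two steps inside `T - x`. If `x → y`, then `x` would reach every vertex, so
`y → x`. Reversing that edge gives `x → y`, and the two-step paths from `y` never enter `x`, so
they survive the reversal: `x` becomes a 3-king.
-/

namespace reachIn

variable {V : Type*} {r : V → V → Prop} {a b c : V}

lemma refl : ∀ (k : ℕ) (a : V), reachIn r k a a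
  | 0, _ => rfl
  | _ + 1, _ => Or.inl rfl

lemma head {k : ℕ} (hab : r a b) (hbc : reachIn r k b c) : reachIn r (k + 1) a c :=
  Or.inr ⟨b, hab, hbc⟩

lemma succ : ∀ {k : ℕ} {a b : V}, reachIn r k a b → reachIn r (k + 1) a b
  | 0, _, _, h => Or.inl h
  | _ + 1, _, _, Or.inl h => Or.inl h
  | _ + 1, _, _, Or.inr ⟨z, hz, h⟩ => Or.inr ⟨z, hz, succ h⟩

lemma mono {k m : ℕ} (hkm : k ≤ m) (h : reachIn r k a b) : reachIn r m a b := by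
  induction m, hkm using Nat.le_induction with
  | base => exact h
  | succ _ _ ih => exact ih.succ

lemma reflTransGen : ∀ {k : ℕ} {a b : V}, reachIn r k a b → Relation.ReflTransGen r a b
  | 0, _, _, h => h ▸ Relation.ReflTransGen.refl
  | _ + 1, _, _, Or.inl h => h ▸ Relation.ReflTransGen.refl
  | _ + 1, _, _, Or.inr ⟨_, hz, h⟩ => Relation.ReflTransGen.head hz h.reflTransGen

end reachIn

lemma IsTournament.adj_of_not_adj {V : Type*} {r : V → V → Prop} (hT : IsTournament r)
    {a b : V} (hab : a ≠ b) (hba : ¬ r b a) : r a b :=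
  (hT.2 a b hab).mpr hba

lemma IsTournament.exists_two_king {V : Type*} {r : V → V → Prop} (hT : IsTournament r)
    (D : Finset V) (hD : D.Nonempty) :
    ∃ y ∈ D, ∀ d ∈ D, d = y ∨ r y d ∨ ∃ w ∈ D, r y w ∧ r w d := by
  classical
  obtain ⟨y, hy, hmax⟩ := D.exists_max_image (fun v => (D.filter (r v)).card) hD
  refine ⟨y, hy, fun d hd => ?_⟩
  by_contra! hfar
  obtain ⟨hdy, hyd, hno_path⟩ := hfar
  -- `d` beats `y` and everything `y` beats, so its out-degree would exceed the maximum.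
  have hsub : insert y (D.filter (r y)) ⊆ D.filter (r d) := by
    intro w hw
    rcases Finset.mem_insert.mp hw with rfl | hw
    · exact Finset.mem_filter.mpr ⟨hy, hT.adj_of_not_adj hdy hyd⟩
    · obtain ⟨hwD, hyw⟩ := Finset.mem_filter.mp hw
      have hdw : d ≠ w := by rintro rfl; exact hyd hyw
      exact Finset.mem_filter.mpr ⟨hwD, hT.adj_of_not_adj hdw (hno_path w hwD hyw)⟩
  have hy_out : y ∉ D.filter (r y) := fun h => hT.1 y (Finset.mem_filter.mp h).2
  have := Finset.card_le_card hsub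
  rw [Finset.card_insert_of_notMem hy_out] at this
  have := hmax d hd
  omega

lemma reachIn_three_of_adj_of_two_king {V : Type*} {r s : V → V → Prop} {x y : V}
    (hxy : s x y) (hking : ∀ z ≠ x, z = y ∨ r y z ∨ ∃ w ≠ x, r y w ∧ r w z)
    (hrs : ∀ a b, r a b → b ≠ x → s a b) (z : V) : reachIn s 3 x z := by
  rcases eq_or_ne z x with rfl | hzx
  · exact reachIn.refl 3 z
  refine reachIn.head hxy ?_
  rcases hking z hzx with rfl | hyz | ⟨w, hwx, hyw, hwz⟩
  · exact reachIn.refl 2 z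
  · exact reachIn.head (hrs y z hyz hzx) (reachIn.refl 1 z)
  · exact reachIn.head (hrs y w hyw hwx) (reachIn.head (hrs w z hwz hzx) (reachIn.refl 0 z))

lemma rev_singleton_swap {V : Type*} (r : V → V → Prop) (a b : V) : rev r {(a, b)} b a :=
  Or.inr (Finset.mem_singleton_self _)

lemma rev_singleton_of_adj {V : Type*} {r : V → V → Prop} {a b u v : V} (huv : r u v)
    (hvb : v ≠ b) : rev r {(a, b)} u v :=
  Or.inl ⟨by simp [hvb], huv⟩

theorem one_reversal_makes_three_king_general {V : Type*} [Fintype V]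
    (r : V → V → Prop) (hT : IsTournament r) (x : V)
    (hx : ¬ ∀ y : V, Relation.ReflTransGen r x y) :
    ∃ e : V × V, r e.1 e.2 ∧
      (∀ y : V, reachIn (rev r {e}) 3 x y) ∧
      (∀ k : ℕ, 3 ≤ k → ∀ y : V, reachIn (rev r {e}) k x y) ∧
      (∀ y : V, Relation.ReflTransGen (rev r {e}) x y) := by
  classical
  have hne : (Finset.univ.erase x).Nonempty := by
    obtain ⟨z, hz⟩ := not_forall.mp hx
    exact ⟨z, Finset.mem_erase.mpr ⟨fun h => hz (h ▸ .refl), Finset.mem_univ z⟩⟩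
  obtain ⟨y, hy, hking⟩ := hT.exists_two_king _ hne
  simp only [Finset.mem_erase, Finset.mem_univ, and_true] at hy hking
  have hyx : r y x := hT.adj_of_not_adj hy fun hxy =>
    hx fun z => (reachIn_three_of_adj_of_two_king hxy hking (fun _ _ h _ => h) z).reflTransGen
  have h3 : ∀ z, reachIn (rev r {(y, x)}) 3 x z :=
    reachIn_three_of_adj_of_two_king (rev_singleton_swap r y x) hking
      fun _ _ h hbx => rev_singleton_of_adj h hbx
  exact ⟨(y, x), hyx, h3, fun k hk z => (h3 z).mono hk, fun z => (h3 z).reflTransGen⟩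

theorem one_reversal_makes_three_king {V : Type*} [Fintype V] [DecidableEq V]
    (r : V → V → Prop) (hT : IsTournament r) (x : V)
    (hn : 2 ≤ Fintype.card V)
    (hx : ¬ ∀ y : V, Relation.ReflTransGen r x y) :
    ∃ e : V × V, r e.1 e.2 ∧
      (∀ y : V, reachIn (rev r {e}) 3 x y) ∧
      (∀ k : ℕ, 3 ≤ k → ∀ y : V, reachIn (rev r {e}) k x y) ∧
      (∀ y : V, Relation.ReflTransGen (rev r {e}) x y) :=
  one_reversal_makes_three_king_general r hT x hx
end

section
/- Let T be a tournament on n ≥ 1 vertices and x any vertex. Then there exists a set R of at most ⌈log₂ n⌉ edges, each incident to x, such that in the tournament T^R the vertex x is in the uncovered set (reaches every other vertex in at most two steps). -/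
/-!
Deleting `x` leaves a tournament on `n - 1` vertices, which has a dominating set `D` with
`|D| ≤ ⌈log₂ n⌉`: some vertex `v` has at most half of the other vertices as in-neighbours, and
putting `v` into `D` leaves only those in-neighbours to be dominated recursively. Reversing the
edges from `D` into `x` makes `x` dominate `D`, so `x` reaches every vertex in two steps.
-/

open Finset

lemma Nat.clog_add_one_le_clog_of_mul_le {b m n : ℕ} (hb : 1 < b) (hm : 0 < m) (h : b * m ≤ n) :
    Nat.clog b m + 1 ≤ Nat.clog b n := by
  have hn : 1 < n := by nlinarith
  rw [Nat.clog_of_one_lt hb hn]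
  gcongr
  exact (Nat.le_div_iff_mul_le (by omega)).2 (by rw [mul_comm]; omega)

def Dominates {V : Type*} (r : V → V → Prop) (D S : Finset V) : Prop :=
  ∀ y ∈ S, y ∈ D ∨ ∃ d ∈ D, r d y

lemma reachIn_two_of_dominates {V : Type*} {s : V → V → Prop} {x : V} {D S : Finset V}
    (hx : ∀ d ∈ D, s x d) (hD : Dominates s D S) {y : V} (hy : y ∈ S) : reachIn s 2 x y := by
  rcases hD y hy with hyD | ⟨d, hd, hdy⟩
  · exact Or.inr ⟨y, hx y hyD, Or.inl rfl⟩
  · exact Or.inr ⟨d, hx d hd, Or.inr ⟨y, hdy, rfl⟩⟩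

namespace IsTournament

variable {V : Type*} {r : V → V → Prop}

lemma rel_of_not_rel (hT : IsTournament r) {v w : V} (hvw : v ≠ w) (h : ¬ r v w) : r w v := by
  by_contra h'
  exact h ((hT.2 v w hvw).2 h')

variable [DecidableRel r]

lemma rev_filter_rel_product_singleton (hT : IsTournament r) {D : Finset V} {x d : V}
    (hd : d ∈ D) (hdx : d ≠ x) : rev r ({d ∈ D | r d x} ×ˢ {x}) x d := by
  by_cases hrdx : r d x
  · exact Or.inr (by simp [hd, hrdx])
  · exact Or.inl ⟨by simp [Ne.symm hdx], hT.rel_of_not_rel hdx hrdx⟩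

variable [DecidableEq V]

lemma card_filter_rel_add_card_filter_rel (hT : IsTournament r) {S : Finset V} {v : V}
    (hv : v ∈ S) : #{w ∈ S | r w v} + #{w ∈ S | r v w} = #S - 1 := by
  rw [← card_union_of_disjoint, ← filter_or, ← card_erase_of_mem hv]
  · congr 1
    ext w
    simp only [mem_filter, mem_erase]
    constructor
    · rintro ⟨hw, h | h⟩ <;> refine ⟨?_, hw⟩ <;> rintro rfl <;> exact hT.1 w h
    · rintro ⟨hwv, hw⟩
      exact ⟨hw, (em (r v w)).symm.imp_left (hT.rel_of_not_rel hwv.symm)⟩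
  · exact disjoint_filter.2 fun w _ hwv hvw => (hT.2 w v (by rintro rfl; exact hT.1 w hwv)).1 hwv hvw

lemma two_mul_sum_card_filter_rel (hT : IsTournament r) (S : Finset V) :
    2 * ∑ v ∈ S, #{w ∈ S | r w v} = #S * (#S - 1) := by
  calc 2 * ∑ v ∈ S, #{w ∈ S | r w v}
      = ∑ v ∈ S, #{w ∈ S | r w v} + ∑ v ∈ S, #{w ∈ S | r v w} := by
        rw [two_mul]
        congr 1
        exact (sum_card_bipartiteAbove_eq_sum_card_bipartiteBelow r).symm
    _ = ∑ _v ∈ S, (#S - 1) := by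
        rw [← sum_add_distrib]
        exact sum_congr rfl fun v hv => hT.card_filter_rel_add_card_filter_rel hv
    _ = #S * (#S - 1) := by rw [sum_const, smul_eq_mul]

lemma exists_two_mul_card_filter_rel_add_one_le (hT : IsTournament r) {S : Finset V}
    (hS : S.Nonempty) : ∃ v ∈ S, 2 * #{w ∈ S | r w v} + 1 ≤ #S := by
  apply exists_le_of_sum_le hS
  rw [sum_add_distrib, ← mul_sum, hT.two_mul_sum_card_filter_rel, sum_const, sum_const,
    smul_eq_mul, smul_eq_mul, mul_one, ← Nat.mul_add_one, Nat.sub_add_cancel hS.card_pos]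

lemma exists_dominates_card_le_clog (hT : IsTournament r) (S : Finset V) :
    ∃ D ⊆ S, #D ≤ Nat.clog 2 (#S + 1) ∧ Dominates r D S := by
  induction S using Finset.strongInduction with
  | H S ih =>
  obtain rfl | hS := S.eq_empty_or_nonempty
  · exact ⟨∅, empty_subset _, by simp, fun y hy => absurd hy (notMem_empty y)⟩
  obtain ⟨v, hv, hsmall⟩ := hT.exists_two_mul_card_filter_rel_add_one_le hS
  obtain ⟨D, hDS, hD, hdom⟩ := ih {w ∈ S | r w v} (filter_ssubset.2 ⟨v, hv, hT.1 v⟩)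
  refine ⟨insert v D, insert_subset hv (hDS.trans (filter_subset _ _)), ?_, ?_⟩
  · calc #(insert v D) ≤ #D + 1 := card_insert_le v D
      _ ≤ Nat.clog 2 (#{w ∈ S | r w v} + 1) + 1 := by gcongr
      _ ≤ Nat.clog 2 (#S + 1) :=
        Nat.clog_add_one_le_clog_of_mul_le one_lt_two (Nat.succ_pos _) (by omega)
  · intro y hy
    by_cases hyv : y = v
    · exact Or.inl (hyv ▸ mem_insert_self v D)
    by_cases hvy : r v y
    · exact Or.inr ⟨v, mem_insert_self v D, hvy⟩
    rcases hdom y (mem_filter.2 ⟨hy, hT.rel_of_not_rel (Ne.symm hyv) hvy⟩) with hyD | ⟨d, hd, hdy⟩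
    · exact Or.inl (mem_insert_of_mem hyD)
    · exact Or.inr ⟨d, mem_insert_of_mem hd, hdy⟩

end IsTournament

theorem constructive_bound_uncovered_general {V : Type*} [Fintype V]
    (r : V → V → Prop) (hT : IsTournament r) (x : V) :
    ∃ R : Finset (V × V), (∀ e ∈ R, r e.1 e.2) ∧
      (∀ e ∈ R, e.1 = x ∨ e.2 = x) ∧
      R.card ≤ Nat.clog 2 (Fintype.card V) ∧
      ∀ y : V, y ≠ x → reachIn (rev r R) 2 x y := by
  classical
  obtain ⟨D, hDS, hDcard, hdom⟩ := hT.exists_dominates_card_le_clog (univ.erase x)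
  rw [card_erase_of_mem (mem_univ x), card_univ,
    Nat.sub_add_cancel (Fintype.card_pos_iff.2 ⟨x⟩)] at hDcard
  set R := {d ∈ D | r d x} ×ˢ {x}
  have hR {a b : V} : (a, b) ∈ R ↔ (a ∈ D ∧ r a x) ∧ b = x := by simp [R, eq_comm]
  have hxD (d : V) (hd : d ∈ D) : rev r R x d :=
    hT.rev_filter_rel_product_singleton hd (ne_of_mem_erase (hDS hd))
  have hdomR : Dominates (rev r R) D (univ.erase x) := fun y hy =>
    (hdom y hy).imp_right fun ⟨d, hd, hdy⟩ =>
      ⟨d, hd, Or.inl ⟨fun h => ne_of_mem_erase hy (hR.1 h).2, hdy⟩⟩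
  refine ⟨R, fun ⟨_, _⟩ he => (hR.1 he).2 ▸ (hR.1 he).1.2, fun ⟨_, _⟩ he => Or.inr (hR.1 he).2,
    ?_, fun y hy => reachIn_two_of_dominates hxD hdomR (mem_erase.2 ⟨hy, mem_univ y⟩)⟩
  calc #R = #{d ∈ D | r d x} := by rw [card_product, card_singleton, mul_one]
    _ ≤ #D := card_filter_le D _
    _ ≤ Nat.clog 2 (Fintype.card V) := hDcard

theorem constructive_bound_uncovered {V : Type*} [Fintype V] [DecidableEq V]
    (r : V → V → Prop) (hT : IsTournament r) (x : V)
    (h1 : 1 ≤ Fintype.card V) :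
    ∃ R : Finset (V × V), (∀ e ∈ R, r e.1 e.2) ∧
      (∀ e ∈ R, e.1 = x ∨ e.2 = x) ∧
      R.card ≤ Nat.clog 2 (Fintype.card V) ∧
      ∀ y : V, y ≠ x → reachIn (rev r R) 2 x y :=
  constructive_bound_uncovered_general r hT x
end

section
/- Let T be a tournament, x a vertex not in the uncovered set, and R a set of edges whose reversal places x in the uncovered set of T^R. Then there exists a set R' of edges, all incident to x, with |R'| ≤ |R|, whose reversal also places x in the uncovered set. -/
/-!
Instead of replacing the edges of `R` avoiding `x` one at a time, replace them all at once.
Reversing an edge `(z, y)` with `x ∉ {z, y}` only creates the step `y → z`, so it is harmless as soon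
as `x → z` holds directly after the reversal. For every such tail `z` this is arranged by reversing
`(z, x)` when `z → x` in `T`, and otherwise by not reversing `(x, z)`. The new edges are indexed by
the tails, hence are at most as many as the edges of `R` avoiding `x`.
-/

theorem reachIn_two_of_forall {V : Type*} {s t : V → V → Prop} {x : V}
    (hst : ∀ a b, s a b → t a b ∨ t x b ∨ b = x) {w : V} (hw : reachIn s 2 x w) :
    reachIn t 2 x w := by
  have first : ∀ {b}, s x b → t x b ∨ b = x := fun {b} h => by
    rcases hst x b h with h | h | h <;> tauto
  simp only [reachIn] at hw ⊢
  rcases hw with rfl | ⟨u, hxu, rfl | ⟨v, huv, rfl⟩⟩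
  · exact Or.inl rfl
  · rcases first hxu with h | rfl
    · exact Or.inr ⟨u, h, Or.inl rfl⟩
    · exact Or.inl rfl
  · rcases first hxu with hxu | rfl
    · rcases hst u v huv with h | h | rfl
      · exact Or.inr ⟨u, hxu, Or.inr ⟨v, h, rfl⟩⟩
      · exact Or.inr ⟨v, h, Or.inl rfl⟩
      · exact Or.inl rfl
    · rcases first huv with h | rfl
      · exact Or.inr ⟨v, h, Or.inl rfl⟩
      · exact Or.inl rfl

section Redirect

open Classical

variable {V : Type*} (r : V → V → Prop) (x : V) (R : Finset (V × V))

noncomputable def remoteTails : Finset V :=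
  (R.filter fun e => e.1 ≠ x ∧ e.2 ≠ x).image Prod.fst

noncomputable def redirectAt : Finset (V × V) :=
  ((R.filter fun e => e.1 = x ∨ e.2 = x).filter fun e => e.2 ∉ remoteTails x R) ∪
    ((remoteTails x R).filter (r · x)).image (·, x)

variable {r x R}

theorem mem_remoteTails {z : V} : z ∈ remoteTails x R ↔ ∃ y, (z, y) ∈ R ∧ z ≠ x ∧ y ≠ x := by
  simp [remoteTails]

theorem ne_of_mem_remoteTails {z : V} (hz : z ∈ remoteTails x R) : z ≠ x := by
  obtain ⟨_, _, h, _⟩ := mem_remoteTails.mp hz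
  exact h

theorem mem_redirectAt {a b : V} : (a, b) ∈ redirectAt r x R ↔
    ((a, b) ∈ R ∧ (a = x ∨ b = x) ∧ b ∉ remoteTails x R) ∨
      (a ∈ remoteTails x R ∧ r a x ∧ b = x) := by
  simp only [redirectAt, Finset.mem_union, Finset.mem_filter, Finset.mem_image, Prod.mk.injEq,
    and_assoc, eq_comm (a := x)]
  aesop

theorem rel_of_mem_redirectAt (hRE : ∀ e ∈ R, r e.1 e.2) :
    ∀ e ∈ redirectAt r x R, r e.1 e.2 := by
  rintro ⟨a, b⟩ he
  rcases mem_redirectAt.mp he with ⟨h, -⟩ | ⟨-, h, rfl⟩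
  · exact hRE _ h
  · exact h

theorem incident_of_mem_redirectAt : ∀ e ∈ redirectAt r x R, e.1 = x ∨ e.2 = x := by
  rintro ⟨a, b⟩ he
  rcases mem_redirectAt.mp he with ⟨-, h, -⟩ | ⟨-, -, h⟩
  · exact h
  · exact Or.inr h

theorem card_redirectAt_le : (redirectAt r x R).card ≤ R.card := by
  have hsplit := Finset.card_filter_add_card_filter_not (s := R) (fun e => e.1 = x ∨ e.2 = x)
  calc (redirectAt r x R).card
      ≤ (R.filter fun e => e.1 = x ∨ e.2 = x).card + (remoteTails x R).card := by
        refine (Finset.card_union_le _ _).trans (add_le_add ?_ ?_)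
        · exact Finset.card_filter_le _ _
        · exact Finset.card_image_le.trans (Finset.card_filter_le _ _)
    _ ≤ (R.filter fun e => e.1 = x ∨ e.2 = x).card + (R.filter fun e => ¬(e.1 = x ∨ e.2 = x)).card := by
        gcongr
        refine Finset.card_image_le.trans (le_of_eq ?_)
        congr 1
        ext e
        simp [not_or]
    _ = R.card := hsplit

theorem rev_redirectAt_of_mem_remoteTails (hT : IsTournament r) {z : V}
    (hz : z ∈ remoteTails x R) : rev r (redirectAt r x R) x z := by
  have hzx := ne_of_mem_remoteTails hz
  by_cases hr : r z x
  · exact Or.inr (mem_redirectAt.mpr (Or.inr ⟨hz, hr, rfl⟩))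
  · refine Or.inl ⟨fun h => ?_, (hT.2 x z hzx.symm).mpr hr⟩
    rcases mem_redirectAt.mp h with ⟨-, -, h⟩ | ⟨-, -, h⟩
    · exact h hz
    · exact hzx h

theorem rev_redirectAt_or (hT : IsTournament r) {a b : V} (hab : rev r R a b) :
    rev r (redirectAt r x R) a b ∨ rev r (redirectAt r x R) x b ∨ b = x := by
  rcases hab with ⟨hnot, hr⟩ | hba
  · by_cases hmem : (a, b) ∈ redirectAt r x R
    · rcases mem_redirectAt.mp hmem with ⟨h, -⟩ | ⟨-, -, h⟩
      · exact absurd h hnot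
      · exact Or.inr (Or.inr h)
    · exact Or.inl (Or.inl ⟨hmem, hr⟩)
  · by_cases hb : b = x
    · exact Or.inr (Or.inr hb)
    by_cases ha : a = x
    · subst ha
      refine Or.inl (Or.inr (mem_redirectAt.mpr (Or.inl ⟨hba, Or.inr rfl, ?_⟩)))
      exact fun h => ne_of_mem_remoteTails h rfl
    · exact Or.inr (Or.inl (rev_redirectAt_of_mem_remoteTails hT
        (mem_remoteTails.mpr ⟨a, hba, hb, ha⟩)))

end Redirect

theorem uncovered_crs_incident_edges_general {V : Type*}
    (r : V → V → Prop) (hT : IsTournament r) (x : V)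
    (R : Finset (V × V)) (hRE : ∀ e ∈ R, r e.1 e.2)
    (hR : ∀ y : V, reachIn (rev r R) 2 x y) :
    ∃ R' : Finset (V × V), (∀ e ∈ R', r e.1 e.2) ∧
      (∀ e ∈ R', e.1 = x ∨ e.2 = x) ∧
      R'.card ≤ R.card ∧
      ∀ y : V, reachIn (rev r R') 2 x y :=
  ⟨redirectAt r x R, rel_of_mem_redirectAt hRE, incident_of_mem_redirectAt,
    card_redirectAt_le, fun y => reachIn_two_of_forall (fun _ _ => rev_redirectAt_or hT) (hR y)⟩

theorem uncovered_crs_incident_edges {V : Type*} [Fintype V] [DecidableEq V]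
    (r : V → V → Prop) (hT : IsTournament r) (x : V)
    (hx : ¬ ∀ y : V, reachIn r 2 x y)
    (R : Finset (V × V)) (hRE : ∀ e ∈ R, r e.1 e.2)
    (hR : ∀ y : V, reachIn (rev r R) 2 x y) :
    ∃ R' : Finset (V × V), (∀ e ∈ R', r e.1 e.2) ∧
      (∀ e ∈ R', e.1 = x ∨ e.2 = x) ∧
      R'.card ≤ R.card ∧
      ∀ y : V, reachIn (rev r R') 2 x y :=
  uncovered_crs_incident_edges_general r hT x R hRE hR
end

section
/- Let T be a tournament in which x is a Condorcet loser and the subtournament T restricted to V(T)∖{x} has no dominating set of size less than d. Then any set R of edge reversals after which x lies in the uncovered set of T^R satisfies |R| ≥ d. -/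
/-! In `T^R` the Condorcet loser `x` can only leave along reversed edges `(z, x) ∈ R`, so every
path `x → z → v` of length two starts at a tail `z` of `R`; the second step is then either an
edge `z → v` of `T` or a reversed edge `(v, z) ∈ R`, which makes `v` a tail itself. Hence the
tails of `R` dominate `T ∖ {x}`, and there are at most `|R|` of them. -/

def IsCondorcetLoser {V : Type*} (r : V → V → Prop) (x : V) : Prop :=
  ∀ y, y ≠ x → r y x

theorem IsTournament.not_rel_of_isCondorcetLoser {V : Type*} {r : V → V → Prop}
    (hT : IsTournament r) {x : V} (hx : IsCondorcetLoser r x) (z : V) : ¬ r x z := by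
  intro hxz
  by_cases hzx : z = x
  · exact hT.1 x (hzx ▸ hxz)
  · exact (hT.2 x z (Ne.symm hzx)).mp hxz (hx z hzx)

theorem reachIn_two_iff {V : Type*} {r : V → V → Prop} {x y : V} :
    reachIn r 2 x y ↔ x = y ∨ ∃ z, r x z ∧ (z = y ∨ r z y) := by
  simp only [reachIn, exists_eq_right]

section Reversal

variable {V : Type*} {r : V → V → Prop} {R : Finset (V × V)}

theorem mem_of_rev_of_not_rel {a b : V} (hab : ¬ r a b) (h : rev r R a b) : (b, a) ∈ R :=
  h.elim (fun h' => absurd h'.2 hab) id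

theorem rel_or_mem_of_rev {a b : V} (h : rev r R a b) : r a b ∨ (b, a) ∈ R :=
  h.imp And.right id

variable [DecidableEq V]

theorem notMem_image_fst_of_forall_not_rel (hR : ∀ e ∈ R, r e.1 e.2) {x : V}
    (hx : ∀ z, ¬ r x z) : x ∉ R.image Prod.fst := by
  simp only [Finset.mem_image, not_exists, not_and]
  rintro e he rfl
  exact hx e.2 (hR e he)

theorem image_fst_dominates_of_reachIn_two {x : V} (hx : ∀ z, ¬ r x z)
    (hreach : ∀ y, reachIn (rev r R) 2 x y) (v : V) (hvx : v ≠ x)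
    (hv : v ∉ R.image Prod.fst) : ∃ u ∈ R.image Prod.fst, r u v := by
  obtain hxv | ⟨z, hxz, hzv⟩ := reachIn_two_iff.mp (hreach v)
  · exact absurd hxv.symm hvx
  have hz : z ∈ R.image Prod.fst :=
    Finset.mem_image.mpr ⟨(z, x), mem_of_rev_of_not_rel (hx z) hxz, rfl⟩
  obtain rfl | hzv := hzv
  · exact absurd hz hv
  obtain hzv | hvz := rel_or_mem_of_rev hzv
  · exact ⟨z, hz, hzv⟩
  · exact absurd (Finset.mem_image.mpr ⟨_, hvz, rfl⟩) hv

end Reversal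

theorem condorcet_loser_uncovered_lower_bound_general {V : Type*} [DecidableEq V]
    (r : V → V → Prop) (hT : IsTournament r) (x : V) (d : ℕ)
    (hloser : ∀ y : V, y ≠ x → r y x)
    (hdom : ∀ X : Finset V, x ∉ X →
      (∀ v : V, v ≠ x → v ∉ X → ∃ u ∈ X, r u v) → d ≤ X.card) :
    ∀ R : Finset (V × V), (∀ e ∈ R, r e.1 e.2) →
      (∀ y : V, reachIn (rev r R) 2 x y) → d ≤ R.card := by
  intro R hR hreach
  have hx : ∀ z, ¬ r x z := hT.not_rel_of_isCondorcetLoser hloser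
  calc d ≤ (R.image Prod.fst).card :=
        hdom _ (notMem_image_fst_of_forall_not_rel hR hx)
          (image_fst_dominates_of_reachIn_two hx hreach)
    _ ≤ R.card := Finset.card_image_le

theorem condorcet_loser_uncovered_lower_bound {V : Type*} [Fintype V] [DecidableEq V]
    (r : V → V → Prop) (hT : IsTournament r) (x : V) (d : ℕ)
    (hloser : ∀ y : V, y ≠ x → r y x)
    (hdom : ∀ X : Finset V, x ∉ X →
      (∀ v : V, v ≠ x → v ∉ X → ∃ u ∈ X, r u v) → d ≤ X.card) :
    ∀ R : Finset (V × V), (∀ e ∈ R, r e.1 e.2) →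
      (∀ y : V, reachIn (rev r R) 2 x y) → d ≤ R.card :=
  condorcet_loser_uncovered_lower_bound_general r hT x d hloser hdom
end

section
/- Let T be a tournament on n vertices and x any vertex. Then x can be made a Banks winner by reversing at most ⌈log₂ n⌉ edges: there exists R with |R| ≤ ⌈log₂ n⌉ such that in T^R, x is the maximal element of an inclusion-maximal transitive subtournament. -/
/-- `x` is a Banks winner of `r`: it is the maximal element of an inclusion-maximal
transitive subtournament. -/
def IsBanksWinner {V : Type*} [DecidableEq V] (r : V → V → Prop) (x : V) : Prop :=
  ∃ C : Finset V, x ∈ C ∧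
    (∀ a ∈ C, ∀ b ∈ C, ∀ c ∈ C, r a b → r b c → r a c) ∧
    (∀ y ∈ C, y ≠ x → r x y) ∧
    ¬ ∃ z : V, ∀ y ∈ C, r z y

open Finset

section

variable {V : Type*} {r : V → V → Prop}

namespace IsTournament

theorem irrefl (hT : IsTournament r) (a : V) : ¬ r a a := hT.1 a

theorem asymm (hT : IsTournament r) {a b : V} (hab : r a b) : ¬ r b a := by
  rcases eq_or_ne a b with rfl | hne
  · exact hT.irrefl a
  · exact (hT.2 a b hne).mp hab

theorem not_rel_iff (hT : IsTournament r) {a b : V} (hne : a ≠ b) : ¬ r a b ↔ r b a :=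
  (hT.2 b a hne.symm).symm

variable [DecidableEq V] [DecidableRel r]

theorem card_filter_rel_add_card_filter_rel_s12 (hT : IsTournament r) {B : Finset V} {y : V}
    (hy : y ∈ B) : #{z ∈ B | r z y} + #{z ∈ B | r y z} + 1 = #B := by
  have hlose : {z ∈ B | ¬ r z y} = insert y {z ∈ B | r y z} := by
    ext z
    rcases eq_or_ne z y with rfl | hne
    · simp [hy, hT.irrefl]
    · simp [hne, hT.not_rel_iff hne]
  have hy' : y ∉ {z ∈ B | r y z} := by simp [hT.irrefl]
  rw [add_assoc, ← card_insert_of_notMem hy', ← hlose, card_filter_add_card_filter_not]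

-- The in-degrees within `B` average `(#B - 1) / 2`.
theorem exists_two_mul_card_filter_rel_lt (hT : IsTournament r) {B : Finset V}
    (hB : B.Nonempty) : ∃ y ∈ B, 2 * #{z ∈ B | r z y} < #B := by
  have hswap : ∑ y ∈ B, #{z ∈ B | r z y} = ∑ y ∈ B, #{z ∈ B | r y z} := by
    simp only [card_filter]
    exact sum_comm
  have hsum : ∑ y ∈ B, 2 * #{z ∈ B | r z y} = ∑ _y ∈ B, (#B - 1) :=
    calc ∑ y ∈ B, 2 * #{z ∈ B | r z y}
        = ∑ y ∈ B, (#{z ∈ B | r z y} + #{z ∈ B | r y z}) := by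
          rw [sum_add_distrib, ← hswap, ← sum_add_distrib]
          simp only [two_mul]
      _ = ∑ _y ∈ B, (#B - 1) := sum_congr rfl fun y hy => by
          have := hT.card_filter_rel_add_card_filter_rel_s12 hy
          omega
  obtain ⟨y, hy, hle⟩ := exists_le_of_sum_le hB hsum.le
  exact ⟨y, hy, by have := card_pos.mpr ⟨y, hy⟩; omega⟩

end IsTournament

def dominators [Fintype V] (r : V → V → Prop) [DecidableRel r] (C : Finset V) : Finset V :=
  {z | ∀ c ∈ C, r z c}

theorem dominators_insert [Fintype V] [DecidableEq V] [DecidableRel r] (y : V) (C : Finset V) :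
    dominators r (insert y C) = {z ∈ dominators r C | r z y} := by
  ext z
  simp [dominators, and_comm]

theorem dominators_eq_empty_iff [Fintype V] [DecidableRel r] {C : Finset V} :
    dominators r C = ∅ ↔ ¬ ∃ z, ∀ c ∈ C, r z c := by
  simp [dominators, eq_empty_iff_forall_notMem]

structure IsTransitiveWithBottom (r : V → V → Prop) (x : V) (C : Finset V) : Prop where
  mem : x ∈ C
  trans : ∀ a ∈ C, ∀ b ∈ C, ∀ c ∈ C, r a b → r b c → r a c
  bottom : ∀ y ∈ C, y ≠ x → r y x

namespace IsTransitiveWithBottom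

variable {x : V} {C : Finset V}

theorem singleton (hT : IsTournament r) (x : V) : IsTransitiveWithBottom r x {x} where
  mem := mem_singleton_self x
  trans a ha b hb _ _ hab _ := by
    rw [mem_singleton] at ha hb
    rw [ha, hb] at hab
    exact absurd hab (hT.irrefl x)
  bottom y hy hyx := absurd (mem_singleton.mp hy) hyx

theorem insert [DecidableEq V] (hT : IsTournament r) (hC : IsTransitiveWithBottom r x C)
    {y : V} (hy : ∀ c ∈ C, r y c) : IsTransitiveWithBottom r x (insert y C) where
  mem := mem_insert_of_mem hC.mem
  trans a ha b hb c hc hab hbc := by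
    have beats_y : ∀ u ∈ Insert.insert y C, ¬ r u y := by
      rintro u hu huy
      rcases mem_insert.mp hu with rfl | hu
      · exact hT.irrefl u huy
      · exact hT.asymm (hy u hu) huy
    rcases mem_insert.mp hb with rfl | hb
    · exact absurd hab (beats_y a ha)
    rcases mem_insert.mp hc with hcy | hc
    · exact absurd (hcy ▸ hbc) (beats_y b (mem_insert_of_mem hb))
    rcases mem_insert.mp ha with hay | ha
    · exact hay ▸ hy c hc
    · exact hC.trans a ha b hb c hc hab hbc
  bottom u hu hux := by
    rcases mem_insert.mp hu with rfl | hu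
    · exact hy x hC.mem
    · exact hC.bottom u hu hux

theorem isBanksWinner_rev [DecidableEq V] (hT : IsTournament r) (hC : IsTransitiveWithBottom r x C)
    (hmax : ¬ ∃ z, ∀ c ∈ C, r z c) : IsBanksWinner (rev r (C.erase x ×ˢ {x})) x := by
  set R := C.erase x ×ˢ {x}
  have rel_of_rev : ∀ {a b}, a ≠ x → rev r R a b → r a b := by
    intro a b hax hab
    simp [R, rev, hax.symm] at hab
    exact hab.2
  have rev_of_rel : ∀ {a b}, a ≠ x → b ≠ x → r a b → rev r R a b := by
    intro a b hax hbx hab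
    simp [R, rev, hax.symm, hbx.symm, hab]
  have not_rev_bottom : ∀ b ∈ C, ¬ rev r R b x := by
    intro b hb
    rcases eq_or_ne b x with rfl | hbx
    · simp [R, rev, hT.irrefl]
    · simp [R, rev, hbx, hbx.symm, hb]
  have rev_bottom : ∀ c ∈ C, c ≠ x → rev r R x c := by
    intro c hc hcx
    simp [R, rev, hc, hcx]
  refine ⟨C, hC.mem, ?_, rev_bottom, ?_⟩
  · intro a ha b hb c hc hab hbc
    have hcx : c ≠ x := fun h => not_rev_bottom b hb (h ▸ hbc)
    by_cases hax : a = x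
    · exact hax ▸ rev_bottom c hc hcx
    have hbx : b ≠ x := fun h => not_rev_bottom a ha (h ▸ hab)
    exact rev_of_rel hax hcx (hC.trans a ha b hb c hc (rel_of_rev hax hab) (rel_of_rev hbx hbc))
  · rintro ⟨z, hz⟩
    have hzx : z ≠ x := fun h => not_rev_bottom x hC.mem (h ▸ hz x hC.mem)
    exact hmax ⟨z, fun c hc => rel_of_rev hzx (hz c hc)⟩

theorem exists_maximal_of_card_dominators_lt [Fintype V] [DecidableEq V] [DecidableRel r]
    (hT : IsTournament r) {k : ℕ} (hC : IsTransitiveWithBottom r x C)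
    (hk : #(dominators r C) < 2 ^ k) :
    ∃ C', IsTransitiveWithBottom r x C' ∧ (¬ ∃ z, ∀ c ∈ C', r z c) ∧
      #C' ≤ #C + k := by
  induction k generalizing C with
  | zero =>
    have hD : dominators r C = ∅ := card_eq_zero.mp (by simpa using hk)
    exact ⟨C, hC, dominators_eq_empty_iff.mp hD, le_rfl⟩
  | succ k ih =>
    obtain hD | hD := (dominators r C).eq_empty_or_nonempty
    · exact ⟨C, hC, dominators_eq_empty_iff.mp hD, by omega⟩
    obtain ⟨y, hyD, hy⟩ := hT.exists_two_mul_card_filter_rel_lt hD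
    have hyC : ∀ c ∈ C, r y c := by simpa [dominators] using hyD
    have hy_notMem : y ∉ C := fun h => hT.irrefl y (hyC y h)
    obtain ⟨C', hC', hmax, hcard⟩ :=
      ih (hC.insert hT hyC) (by rw [dominators_insert]; rw [pow_succ] at hk; omega)
    rw [card_insert_of_notMem hy_notMem] at hcard
    exact ⟨C', hC', hmax, by omega⟩

end IsTransitiveWithBottom

end

theorem constructive_bound_banks {V : Type*} [Fintype V] [DecidableEq V]
    (r : V → V → Prop) (hT : IsTournament r) (x : V) :
    ∃ R : Finset (V × V), (∀ e ∈ R, r e.1 e.2) ∧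
      R.card ≤ Nat.clog 2 (Fintype.card V) ∧
      IsBanksWinner (rev r R) x := by
  classical
  have hstart : #(dominators r {x}) < 2 ^ Nat.clog 2 (Fintype.card V) :=
    (card_lt_univ_of_notMem (x := x) (by simp [dominators, hT.irrefl])).trans_le
      (Nat.le_pow_clog one_lt_two _)
  obtain ⟨C, hC, hmax, hcard⟩ :=
    (IsTransitiveWithBottom.singleton hT x).exists_maximal_of_card_dominators_lt hT hstart
  refine ⟨C.erase x ×ˢ {x}, ?_, ?_, hC.isBanksWinner_rev hT hmax⟩
  · simp only [mem_product, mem_erase, mem_singleton]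
    rintro ⟨a, b⟩ ⟨⟨hax, ha⟩, rfl⟩
    exact hC.bottom a ha hax
  · rw [card_product, card_singleton, mul_one, card_erase_of_mem hC.mem]
    rw [card_singleton] at hcard
    omega
end

section
/- Let T be a tournament and x a vertex. If x dominates some vertex y that is in the uncovered set of T (and y ≠ x), then x is in the top cycle of T. In particular x can reach every other vertex by a directed path of length at most 3. -/
section reachIn

variable {V : Type*} {r : V → V → Prop}

theorem reachIn_refl : ∀ (k : ℕ) (a : V), reachIn r k a a
  | 0, _ => rfl
  | _ + 1, _ => Or.inl rfl

theorem reachIn.head_s15 {k : ℕ} {a b c : V} (hab : r a b) (hbc : reachIn r k b c) :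
    reachIn r (k + 1) a c :=
  Or.inr ⟨b, hab, hbc⟩

theorem reachIn.reflTransGen_s15 : ∀ {k : ℕ} {a b : V}, reachIn r k a b → Relation.ReflTransGen r a b
  | 0, _, _, rfl => .refl
  | _ + 1, _, _, .inl rfl => .refl
  | _ + 1, _, _, .inr ⟨_, hac, hcb⟩ => .head hac hcb.reflTransGen_s15

end reachIn

theorem dominate_uncovered_implies_tc_general {V : Type*}
    (r : V → V → Prop) (x y : V)
    (hdom : r x y) (hy : ∀ z : V, z ≠ y → reachIn r 2 y z) :
    (∀ z : V, Relation.ReflTransGen r x z) ∧ (∀ z : V, reachIn r 3 x z) := by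
  have hy' : ∀ z, reachIn r 2 y z := by
    intro z
    by_cases hzy : z = y
    · exact hzy ▸ reachIn_refl 2 z
    · exact hy z hzy
  have hx : ∀ z, reachIn r 3 x z := fun z => (hy' z).head_s15 hdom
  exact ⟨fun z => (hx z).reflTransGen_s15, hx⟩

theorem dominate_uncovered_implies_tc {V : Type*}
    (r : V → V → Prop) (hT : IsTournament r) (x y : V) (hxy : y ≠ x)
    (hdom : r x y) (hy : ∀ z : V, z ≠ y → reachIn r 2 y z) :
    (∀ z : V, Relation.ReflTransGen r x z) ∧ (∀ z : V, reachIn r 3 x z) :=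
  dominate_uncovered_implies_tc_general r x y hdom hy
end

section
/- For even n = 2ℓ with ℓ ≥ 1, consider the tournament T on vertices x, y₁, …, y_{2ℓ−1}, where x dominates every yᵢ and each yᵢ dominates the ℓ−1 cyclically following vertices y_{i+1}, …, y_{i+ℓ−1} (indices mod 2ℓ−1). Then for any set R of fewer than ℓ edges of T, x remains in the Banks set of the tournament T^R obtained by reversing the edges of R. -/
/-- The tournament on `x = none` and the `2ℓ-1` vertices `some i`:
`x` dominates all `some i`, and `some i` dominates the `ℓ-1` cyclically
following vertices. -/
def cyc (ℓ : ℕ) : Option (Fin (2 * ℓ - 1)) → Option (Fin (2 * ℓ - 1)) → Prop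
  | none, none => False
  | none, some _ => True
  | some _, none => False
  | some i, some j =>
      1 ≤ (j.val + (2 * ℓ - 1) - i.val) % (2 * ℓ - 1) ∧
      (j.val + (2 * ℓ - 1) - i.val) % (2 * ℓ - 1) ≤ ℓ - 1

/-! For each `i`, the only vertex dominating both `yᵢ` and `y_{i+ℓ-1}` is `x`: a `y_k` beating `yᵢ`
lies at most `ℓ - 1` steps before it on the cycle, so `y_{i+ℓ-1}` lies at least `ℓ` steps after
`y_k`. Reversing an edge can only spoil the pairs `{yᵢ, y_{i+ℓ-1}}` containing its tail (its head,
for an edge out of `x`), and every vertex lies in two pairs, so fewer than `ℓ` reversals leave one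
of the `2ℓ - 1` pairs intact; with `x` it forms a maximal transitive subtournament. -/

open Finset Function

section Reversal

variable {V : Type*} {r : V → V → Prop} {R : Finset (V × V)}

lemma rev_asymm (hr : ∀ a b, r a b → ¬ r b a) (hR : ∀ e ∈ R, r e.1 e.2) :
    ∀ a b, rev r R a b → ¬ rev r R b a := by
  rintro a b (⟨hab, rab⟩ | hba) (⟨hba', rba⟩ | hab')
  · exact hr a b rab rba
  · exact hab hab'
  · exact hba' hba
  · exact hr a b (hR _ hab') (hR _ hba)

lemma of_rev_of_notMem {a b : V} (hba : (b, a) ∉ R) : rev r R a b → r a b := by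
  rintro (⟨-, rab⟩ | hba')
  · exact rab
  · exact absurd hba' hba

end Reversal

lemma isBanksWinner_of_asymm {V : Type*} [DecidableEq V] {s : V → V → Prop}
    (hs : ∀ a b, s a b → ¬ s b a) {x a b : V} (ha : s x a) (hb : s x b)
    (hmax : ¬ ∃ z, s z x ∧ s z a ∧ s z b) : IsBanksWinner s x := by
  refine ⟨{x, a, b}, by simp, ?_, ?_, ?_⟩
  · simp only [mem_insert, mem_singleton]
    grind
  · simp only [mem_insert, mem_singleton]
    rintro y (rfl | rfl | rfl) hy
    exacts [absurd rfl hy, ha, hb]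
  · rintro ⟨z, hz⟩
    exact hmax ⟨z, hz x (by simp), hz a (by simp), hz b (by simp)⟩

lemma exists_apply_notMem_and_apply_notMem {α β : Type*} [Fintype α] {f g : α → β}
    (hf : Injective f) (hg : Injective g) (T : Finset β) (hT : 2 * #T < Fintype.card α) :
    ∃ a, f a ∉ T ∧ g a ∉ T := by
  classical
  have preimage_card_le {h : α → β} (hh : Injective h) : #{a | h a ∈ T} ≤ #T :=
    card_le_card_of_injOn h (fun a ha => by simpa using ha) hh.injOn
  by_contra! hcover
  have hall : ({a | f a ∈ T ∨ g a ∈ T} : Finset α) = univ :=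
    filter_true_of_mem fun a _ => (em _).imp_right (hcover a)
  have : Fintype.card α ≤ 2 * #T :=
    calc Fintype.card α = #({a | f a ∈ T ∨ g a ∈ T} : Finset α) := by rw [hall, card_univ]
      _ ≤ #({a | f a ∈ T} : Finset α) + #({a | g a ∈ T} : Finset α) := by
        rw [filter_or]; exact card_union_le _ _
      _ ≤ 2 * #T := by linarith [preimage_card_le hf, preimage_card_le hg]
  omega

section CyclicTournament

variable {ℓ : ℕ}

lemma cyc_some_some_iff (i j : Fin (2 * ℓ - 1)) :
    cyc ℓ (some i) (some j) ↔ 1 ≤ (j - i).val ∧ (j - i).val ≤ ℓ - 1 := by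
  rw [Fin.val_sub, show 2 * ℓ - 1 - i.val + j.val = j.val + (2 * ℓ - 1) - i.val by omega]
  rfl

lemma cyc_asymm : ∀ a b : Option (Fin (2 * ℓ - 1)), cyc ℓ a b → ¬ cyc ℓ b a
  | none, none, h, _ => h
  | none, some _, _, h => h
  | some _, none, h, _ => h
  | some i, some j, hij, hji => by
    rw [cyc_some_some_iff] at hij hji
    rcases le_or_gt i j with h | h
    · rw [Fin.sub_val_of_le h] at hij
      rw [Fin.coe_sub_iff_lt.2 (by omega)] at hji
      omega
    · rw [Fin.sub_val_of_le h.le] at hji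
      rw [Fin.coe_sub_iff_lt.2 h] at hij
      omega

lemma not_cyc_of_cyc_of_val_sub_eq {k i j : Fin (2 * ℓ - 1)} (hij : (j - i).val = ℓ - 1)
    (hki : cyc ℓ (some k) (some i)) : ¬ cyc ℓ (some k) (some j) := by
  have : NeZero (2 * ℓ - 1) := NeZero.of_pos k.pos
  rw [cyc_some_some_iff] at hki ⊢
  rw [← sub_add_sub_cancel j i k, Fin.val_add, hij, Nat.mod_eq_of_lt (by omega)]
  omega

end CyclicTournament

theorem banks_destructive_lower_bound_general (ℓ : ℕ)
    (R : Finset (Option (Fin (2 * ℓ - 1)) × Option (Fin (2 * ℓ - 1))))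
    (hRE : ∀ e ∈ R, cyc ℓ e.1 e.2) (hcard : R.card < ℓ) :
    IsBanksWinner (rev (cyc ℓ) R) none := by
  have : NeZero (2 * ℓ - 1) := ⟨by omega⟩
  let shift : Fin (2 * ℓ - 1) := ⟨ℓ - 1, by omega⟩
  -- `e.1.or e.2` is the tail of `e`, or its head when the tail is `x = none`.
  let T := R.image fun e => e.1.or e.2
  have hT : 2 * #T < Fintype.card (Fin (2 * ℓ - 1)) := by
    have : #T ≤ #R := card_image_le
    rw [Fintype.card_fin]; omega
  obtain ⟨i, hi, hi'⟩ := exists_apply_notMem_and_apply_notMem (Option.some_injective _)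
    ((Option.some_injective _).comp (add_left_injective shift)) T hT
  have untouched {y : Fin (2 * ℓ - 1)} (hy : some y ∉ T) :
      (none, some y) ∉ R ∧ ∀ v, (some y, v) ∉ R :=
    ⟨fun h => hy (mem_image_of_mem _ h), fun v h => hy (mem_image_of_mem _ h)⟩
  have hasymm := rev_asymm (cyc_asymm (ℓ := ℓ)) hRE
  refine isBanksWinner_of_asymm hasymm (Or.inl ⟨(untouched hi).1, trivial⟩)
    (Or.inl ⟨(untouched hi').1, trivial⟩) ?_
  rintro ⟨_ | k, hzx, hzi, hzi'⟩
  · exact hasymm _ _ hzx hzx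
  · refine not_cyc_of_cyc_of_val_sub_eq ?_ (of_rev_of_notMem ((untouched hi).2 _) hzi)
      (of_rev_of_notMem ((untouched hi').2 _) hzi')
    simp [shift]

theorem banks_destructive_lower_bound (ℓ : ℕ) (hℓ : 1 ≤ ℓ)
    (R : Finset (Option (Fin (2 * ℓ - 1)) × Option (Fin (2 * ℓ - 1))))
    (hRE : ∀ e ∈ R, cyc ℓ e.1 e.2) (hcard : R.card < ℓ) :
    IsBanksWinner (rev (cyc ℓ) R) none :=
  banks_destructive_lower_bound_general ℓ R hRE hcard
end

section
/- For even n = 2ℓ with ℓ ≥ 1, consider the tournament T on vertices x, y₁, …, y_{2ℓ−1}, where x dominates every yᵢ and each yᵢ dominates the ℓ−1 cyclically following vertices (indices mod 2ℓ−1). Then for any set R of fewer than ℓ = n/2 edges, x remains a Copeland winner (vertex of maximum outdegree) of T^R. -/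
noncomputable def outdeg {V : Type*} (r : V → V → Prop) (x : V) : ℕ :=
  {y | r x y}.ncard

open Finset

section Reversal

variable {V : Type*} [DecidableEq V]

lemma ncard_setOf_mem_le_card_filter_snd (R : Finset (V × V)) (v : V) :
    {y | (y, v) ∈ R}.ncard ≤ #{e ∈ R | e.2 = v} := by
  calc {y | (y, v) ∈ R}.ncard
      ≤ (Prod.fst '' ↑{e ∈ R | e.2 = v}).ncard :=
        Set.ncard_le_ncard (fun y hy => ⟨(y, v), by simpa using hy, rfl⟩) (Set.toFinite _)
    _ ≤ #{e ∈ R | e.2 = v} := by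
        rw [← Set.ncard_coe_finset {e ∈ R | e.2 = v}]
        exact Set.ncard_image_le (Set.toFinite _)

lemma ncard_setOf_mem_le_card_filter_fst (R : Finset (V × V)) (x : V) :
    {y | (x, y) ∈ R}.ncard ≤ #{e ∈ R | e.1 = x} := by
  calc {y | (x, y) ∈ R}.ncard
      ≤ (Prod.snd '' ↑{e ∈ R | e.1 = x}).ncard :=
        Set.ncard_le_ncard (fun y hy => ⟨(x, y), by simpa using hy, rfl⟩) (Set.toFinite _)
    _ ≤ #{e ∈ R | e.1 = x} := by
        rw [← Set.ncard_coe_finset {e ∈ R | e.1 = x}]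
        exact Set.ncard_image_le (Set.toFinite _)

lemma card_filter_snd_add_card_filter_fst_le (R : Finset (V × V)) (v x : V) :
    #{e ∈ R | e.2 = v} + #{e ∈ R | e.1 = x} ≤ #R + 1 := by
  have hunion : {e ∈ R | e.2 = v} ∪ {e ∈ R | e.1 = x} ⊆ R :=
    union_subset (filter_subset _ _) (filter_subset _ _)
  have hinter : {e ∈ R | e.2 = v} ∩ {e ∈ R | e.1 = x} ⊆ {(x, v)} := by
    intro e he
    simp only [mem_inter, mem_filter] at he
    simp [Prod.ext_iff, he.1.2, he.2.2]
  rw [← card_union_add_card_inter]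
  have hle := card_le_card hunion
  have hle' := card_le_card hinter
  rw [card_singleton] at hle'
  omega

variable [Finite V] (r : V → V → Prop) (R : Finset (V × V))

lemma outdeg_rev_le (v : V) : outdeg (rev r R) v ≤ outdeg r v + #{e ∈ R | e.2 = v} := by
  have hsub : {y | rev r R v y} ⊆ {y | r v y} ∪ {y | (y, v) ∈ R} := by
    rintro y (⟨_, hy⟩ | hy)
    exacts [Or.inl hy, Or.inr hy]
  calc outdeg (rev r R) v
      ≤ ({y | r v y} ∪ {y | (y, v) ∈ R}).ncard := Set.ncard_le_ncard hsub (Set.toFinite _)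
    _ ≤ outdeg r v + {y | (y, v) ∈ R}.ncard := Set.ncard_union_le _ _
    _ ≤ outdeg r v + #{e ∈ R | e.2 = v} := by
        gcongr; exact ncard_setOf_mem_le_card_filter_snd R v

lemma outdeg_le_outdeg_rev_add (x : V) : outdeg r x ≤ outdeg (rev r R) x + #{e ∈ R | e.1 = x} := by
  have hsub : {y | r x y} ⊆ {y | rev r R x y} ∪ {y | (x, y) ∈ R} := by
    intro y hy
    by_cases hR : (x, y) ∈ R
    exacts [Or.inr hR, Or.inl (Or.inl ⟨hR, hy⟩)]
  calc outdeg r x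
      ≤ ({y | rev r R x y} ∪ {y | (x, y) ∈ R}).ncard := Set.ncard_le_ncard hsub (Set.toFinite _)
    _ ≤ outdeg (rev r R) x + {y | (x, y) ∈ R}.ncard := Set.ncard_union_le _ _
    _ ≤ outdeg (rev r R) x + #{e ∈ R | e.1 = x} := by
        gcongr; exact ncard_setOf_mem_le_card_filter_fst R x

end Reversal

lemma outdeg_cyc_none (ℓ : ℕ) : outdeg (cyc ℓ) none = 2 * ℓ - 1 := by
  have h : {y | cyc ℓ none y} = Set.range some := by
    ext y; cases y <;> simp [cyc]
  rw [outdeg, h, Set.ncard_range_of_injective (Option.some_injective _), Nat.card_eq_fintype_card,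
    Fintype.card_fin]

lemma outdeg_cyc_some_le (ℓ : ℕ) (i : Fin (2 * ℓ - 1)) : outdeg (cyc ℓ) (some i) ≤ ℓ - 1 := by
  let dist : Option (Fin (2 * ℓ - 1)) → ℕ := fun y => y.elim 0 fun j => (j - i).val
  have hdist (j : Fin (2 * ℓ - 1)) :
      dist (some j) = (j.val + (2 * ℓ - 1) - i.val) % (2 * ℓ - 1) := by
    simp only [dist, Option.elim_some, Fin.val_sub]
    congr 1
    omega
  have hmaps : ∀ y ∈ {y | cyc ℓ (some i) y}, dist y ∈ (Set.Icc 1 (ℓ - 1) : Set ℕ) := by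
    rintro (_ | j) hy
    · exact hy.elim
    · rw [hdist]; exact hy
  have hinj : Set.InjOn dist {y | cyc ℓ (some i) y} := by
    rintro (_ | a) ha (_ | b) hb hab
    · rfl
    · exact ha.elim
    · exact hb.elim
    · have : NeZero (2 * ℓ - 1) := NeZero.of_pos i.pos
      simpa using sub_left_injective (Fin.val_injective hab)
  calc outdeg (cyc ℓ) (some i)
      ≤ (Set.Icc 1 (ℓ - 1) : Set ℕ).ncard := Set.ncard_le_ncard_of_injOn dist hmaps hinj
    _ = ℓ - 1 := by
        rw [← coe_Icc, Set.ncard_coe_finset, Nat.card_Icc]; omega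

theorem copeland_destructive_lower_bound_general (ℓ : ℕ)
    (R : Finset (Option (Fin (2 * ℓ - 1)) × Option (Fin (2 * ℓ - 1))))
    (hcard : R.card < ℓ) :
    ∀ v : Option (Fin (2 * ℓ - 1)),
      outdeg (rev (cyc ℓ) R) v ≤ outdeg (rev (cyc ℓ) R) none := by
  rintro (_ | i)
  · exact le_rfl
  have hv := outdeg_rev_le (cyc ℓ) R (some i)
  have hx := outdeg_le_outdeg_rev_add (cyc ℓ) R none
  have hR := card_filter_snd_add_card_filter_fst_le R (some i) none
  have hx₀ := outdeg_cyc_none ℓ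
  have hv₀ := outdeg_cyc_some_le ℓ i
  omega

theorem copeland_destructive_lower_bound (ℓ : ℕ) (hℓ : 1 ≤ ℓ)
    (R : Finset (Option (Fin (2 * ℓ - 1)) × Option (Fin (2 * ℓ - 1))))
    (hRE : ∀ e ∈ R, cyc ℓ e.1 e.2) (hcard : R.card < ℓ) :
    ∀ v : Option (Fin (2 * ℓ - 1)),
      outdeg (rev (cyc ℓ) R) v ≤ outdeg (rev (cyc ℓ) R) none :=
  copeland_destructive_lower_bound_general ℓ R hcard
end

section
/- Let T be a tournament and x a vertex such that some vertex y covers x, i.e., y dominates x and D(x) ⊆ D(y). Then x is not in the Banks set of T: every transitive subtournament with x as maximal element can be extended. -/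
theorem dominates_of_covers_of_forall_ne_rel {V : Type*} {r : V → V → Prop} {x y : V}
    (hyx : r y x) (hcov : ∀ z : V, r x z → r y z) {s : Set V}
    (hhead : ∀ w ∈ s, w ≠ x → r x w) :
    ∀ w ∈ s, r y w := by
  intro w hw
  obtain rfl | hwx := eq_or_ne w x
  · exact hyx
  · exact hcov w (hhead w hw hwx)

theorem covered_not_banks_winner_general {V : Type*} [DecidableEq V]
    (r : V → V → Prop) (x y : V)
    (hyx : r y x) (hcov : ∀ z : V, r x z → r y z) :
    (∀ C : Finset V, x ∈ C →
      (∀ a ∈ C, ∀ b ∈ C, ∀ c ∈ C, r a b → r b c → r a c) →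
      (∀ w ∈ C, w ≠ x → r x w) →
      ∃ z : V, ∀ w ∈ C, r z w) ∧
    ¬ IsBanksWinner r x := by
  have extend (C : Finset V) (hhead : ∀ w ∈ C, w ≠ x → r x w) : ∃ z : V, ∀ w ∈ C, r z w :=
    ⟨y, dominates_of_covers_of_forall_ne_rel hyx hcov (s := C) hhead⟩
  refine ⟨fun C _ _ hhead => extend C hhead, ?_⟩
  rintro ⟨C, -, -, hhead, hmaximal⟩
  exact hmaximal (extend C hhead)

theorem covered_not_banks_winner {V : Type*} [DecidableEq V]
    (r : V → V → Prop) (hT : IsTournament r) (x y : V)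
    (hyx : r y x) (hcov : ∀ z : V, r x z → r y z) :
    (∀ C : Finset V, x ∈ C →
      (∀ a ∈ C, ∀ b ∈ C, ∀ c ∈ C, r a b → r b c → r a c) →
      (∀ w ∈ C, w ≠ x → r x w) →
      ∃ z : V, ∀ w ∈ C, r z w) ∧
    ¬ IsBanksWinner r x :=
  covered_not_banks_winner_general r x y hyx hcov
end
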